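/- arXiv:2311.06189 — 3 statements merged into one kernel-verified Lean document; each statement's English description precedes it below -/
import Mathlib

section
/- The ReLU operator R(x) = max(x, 0) is a Rota–Baxter operator of weight +1 on the max-plus semiring (ℝ ∪ {−∞}, max, +); that is, for all x, y in ℝ ∪ {−∞}, max(x,0) + max(y,0) = max( max(max(x,0)+y, 0), max(x+max(y,0), 0), max(x+y, 0) ). -/
/-!
Since `+` is monotone in each argument, it distributes over `max` from both sides, so both
sides of the identity expand to a maximum of the four terms `a + b`, `a`, `b` and `0` (with
repetitions on the right). As `max` is associative, commutative and idempotent, they agree.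
-/

theorem max_zero_add_max_zero {α : Type*} [LinearOrder α] [AddZeroClass α] [AddLeftMono α]
    [AddRightMono α] (a b : α) :
    max a 0 + max b 0 =
      max (max (a + max b 0) 0) (max (max (max a 0 + b) 0) (max (a + b) 0)) := by
  simp only [add_max, max_add, add_zero, zero_add]
  ac_nf

/-- The ReLU operator `R(x) = max x 0` is a Rota–Baxter operator of weight `+1`
on the max-plus (tropical) semiring `ℝ ∪ {−∞}` with addition `max` and
multiplication `+`. -/
theorem relu_rotaBaxter_weight_one :
    ∀ x y : WithBot ℝ,
      max x 0 + max y 0 =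
        max (max (x + max y 0) 0) (max (max (max x 0 + y) 0) (max (x + y) 0)) :=
  max_zero_add_max_zero
end

section
/- For every λ ∈ [0,1], the threshold operator c_λ on the semiring ([0,1], max, ·), defined by c_λ(x) = x if x < λ and c_λ(x) = 1 if x ≥ λ, is a Rota–Baxter operator of weight −1: for all x, y ∈ [0,1], max( c_λ(x)·c_λ(y), c_λ(x·y) ) = max( c_λ(c_λ(x)·y), c_λ(x·c_λ(y)) ). -/
/-! The threshold operator fixes everything below `λ` and collapses the rest to the top element `1`.
Splitting on which of `x`, `y` lie below `λ`, both sides of the identity reduce to the same value: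
`x * y` when both do (on `[0,1]` a product is below each factor), `c_λ (x * y) ⊔ x` or
`y ⊔ c_λ (x * y)` when exactly one does, and `1` when neither does. -/

def threshold {α : Type*} [One α] [LinearOrder α] (lam z : α) : α :=
  if z < lam then z else 1

/-- Rota–Baxter operators of weight `-1` on the semiring `(s, ⊔, *)`; the weight term `R (x * y)` sits
on the left because `⊔` has no subtraction. -/
def IsMaxTimesRotaBaxter {α : Type*} [Mul α] [Max α] (R : α → α) (s : Set α) : Prop :=
  ∀ x ∈ s, ∀ y ∈ s, R x * R y ⊔ R (x * y) = R (R x * y) ⊔ R (x * R y)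

namespace threshold

variable {α : Type*} [One α] [LinearOrder α] {lam z : α}

theorem of_lt (h : z < lam) : threshold lam z = z := if_pos h

theorem of_le (h : lam ≤ z) : threshold lam z = 1 := if_neg h.not_gt

theorem le_one (h : z ≤ 1) : threshold lam z ≤ 1 := by
  unfold threshold
  split_ifs
  exacts [h, le_rfl]

end threshold

open threshold in
theorem isMaxTimesRotaBaxter_threshold {α : Type*} [Semiring α] [LinearOrder α] [IsOrderedRing α] (lam : α) :
    IsMaxTimesRotaBaxter (threshold lam) (Set.Icc 0 1) := by
  rintro x ⟨hx0, hx1⟩ y ⟨hy0, hy1⟩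
  rcases lt_or_ge x lam with hx | hx <;> rcases lt_or_ge y lam with hy | hy
  · have hxy : x * y < lam := (mul_le_of_le_one_right hx0 hy1).trans_lt hx
    simp only [of_lt hx, of_lt hy, of_lt hxy]
  · simp only [of_lt hx, of_le hy, mul_one, sup_comm]
  · simp only [of_lt hy, of_le hx, one_mul]
  · have hxy : threshold lam (x * y) ≤ 1 := le_one (mul_le_one₀ hx1 hy0 hy1)
    simp only [of_le hx, of_le hy, mul_one, one_mul, sup_idem, sup_of_le_left hxy]

/-- For every `λ ∈ [0,1]`, the threshold operator `c_λ` on the semiring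
`([0,1], max, ·)`, given by `c_λ x = x` if `x < λ` and `c_λ x = 1` if `x ≥ λ`,
is a Rota–Baxter operator of weight `−1`:
`max (c_λ x * c_λ y) (c_λ (x*y)) = max (c_λ (c_λ x * y)) (c_λ (x * c_λ y))`. -/
theorem threshold_rotaBaxter_weight_neg_one :
    ∀ lam ∈ Set.Icc (0 : ℝ) 1, ∀ x ∈ Set.Icc (0 : ℝ) 1, ∀ y ∈ Set.Icc (0 : ℝ) 1,
      (fun z : ℝ => if z < lam then z else 1) x * (fun z : ℝ => if z < lam then z else 1) y ⊔
          (fun z : ℝ => if z < lam then z else 1) (x * y) =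
        (fun z : ℝ => if z < lam then z else 1) ((fun z : ℝ => if z < lam then z else 1) x * y) ⊔
          (fun z : ℝ => if z < lam then z else 1) (x * (fun z : ℝ => if z < lam then z else 1) y) :=
  fun lam _ => isMaxTimesRotaBaxter_threshold lam
end

section
/- Let H be a graded connected commutative bialgebra and (A, R) a commutative Rota–Baxter algebra of weight −1 with R(1) = 0. Let φ : H → A be an algebra homomorphism, and define φ₋ and φ₊ by the Bogolyubov recursion φ₋(x) = −R(φ̃(x)), φ₊(x) = (1−R)(φ̃(x)) with φ̃(x) = φ(x) + Σ φ₋(x′)φ(x″). Then φ₋ and φ₊ are both algebra homomorphisms (multiplicative maps). -/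
/-!
Write `Φ = φ₋ ⋆ φ` for the convolution, so that `φ̃ = Φ - φ₋`, `φ₋ = -R (Φ - φ₋)`, and
`φ₊ = Φ` in positive degree. Multiplicativity of `φ₋` is proved by induction on the total
degree. For homogeneous `x`, `y` of positive degree, grading and counit give
`Δ x = x ⊗ 1 + (terms whose left factor has lower degree)`, so by induction
`Φ (x y) - Φ x Φ y = φ₋ (x y) - φ₋ x φ₋ y`. The Rota–Baxter identity for
`a = Φ x - φ₋ x`, `b = Φ y - φ₋ y` gives `φ₋ x φ₋ y = -R (Φ x Φ y - φ₋ x φ₋ y)`, and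
`φ₋ (x y) = -R (Φ (x y) - φ₋ (x y))`; subtracting, the defect is `-R 0 = 0`.
Finally `φ₊ = φ₋ ⋆ φ` is a convolution of algebra maps with commutative target, hence
multiplicative.
-/

open TensorProduct WithConv

section RotaBaxter

variable {A F : Type*} [CommRing A] [FunLike F A A] [AddMonoidHomClass F A A]

theorem mul_eq_neg_map_of_rotaBaxter {R : F}
    (hRB : ∀ a b : A, R a * R b = R (a * R b) + R (R a * b) - R (a * b))
    {a b p q : A} (ha : R a = -p) (hb : R b = -q) :
    p * q = -R ((a + p) * (b + q) - p * q) := by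
  have h := hRB a b
  rw [ha, hb] at h
  simp only [mul_neg, neg_mul, map_neg] at h
  rw [show (a + p) * (b + q) - p * q = a * b + a * q + p * b by ring, map_add, map_add]
  linear_combination h

end RotaBaxter

section Bilinear

variable {k M N M' N' P : Type*} [CommSemiring k]
  [AddCommMonoid M] [AddCommMonoid N] [AddCommMonoid M'] [AddCommMonoid N'] [AddCommMonoid P]
  [Module k M] [Module k N] [Module k M'] [Module k N'] [Module k P]

theorem map₂_range_rTensor_eq_bot (B : M ⊗[k] N →ₗ[k] M' ⊗[k] N' →ₗ[k] P)
    {p : Submodule k M} {q : Submodule k M'}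
    (h : ∀ a ∈ p, ∀ b : N, ∀ c ∈ q, ∀ d : N', B (a ⊗ₜ b) (c ⊗ₜ d) = 0) :
    Submodule.map₂ B (LinearMap.range (p.subtype.rTensor N))
      (LinearMap.range (q.subtype.rTensor N')) = ⊥ := by
  rw [LinearMap.rTensor_def, LinearMap.rTensor_def, range_map_eq_span_tmul,
    range_map_eq_span_tmul, Submodule.map₂_span_span, Submodule.span_eq_bot]
  rintro _ ⟨_, ⟨a, b, rfl⟩, _, ⟨c, d, rfl⟩, rfl⟩
  exact h _ a.2 _ _ c.2 _

theorem rid_lTensor_mem_of_mem_range_rTensor (ε : N →ₗ[k] k) {p : Submodule k M}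
    {t : M ⊗[k] N} (ht : t ∈ LinearMap.range (p.subtype.rTensor N)) :
    TensorProduct.rid k M (ε.lTensor M t) ∈ p := by
  obtain ⟨s, rfl⟩ := ht
  have hcomm : (TensorProduct.rid k M).toLinearMap ∘ₗ ε.lTensor M ∘ₗ p.subtype.rTensor N =
      p.subtype ∘ₗ (TensorProduct.rid k p).toLinearMap ∘ₗ ε.lTensor p :=
    TensorProduct.ext' fun a b => by simp
  exact (congrArg (· s) hcomm).symm ▸ Submodule.coe_mem _

theorem LinearMap.eq_zero_of_map₂_eq_bot {ι κ : Type*} {p : ι → Submodule k M}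
    {q : κ → Submodule k N} (hp : iSup p = ⊤) (hq : iSup q = ⊤) (g : M →ₗ[k] N →ₗ[k] P)
    (h : ∀ i j, Submodule.map₂ g (p i) (q j) = ⊥) : g = 0 := by
  have htop : Submodule.map₂ g ⊤ ⊤ = ⊥ := by
    simp only [← hp, ← hq, Submodule.map₂_iSup_left, Submodule.map₂_iSup_right, h, iSup_bot]
  ext x y
  have hxy := Submodule.apply_mem_map₂ g (Submodule.mem_top (x := x)) (Submodule.mem_top (x := y))
  rwa [htop, Submodule.mem_bot] at hxy

end Bilinear

section GradedBialgebra

variable {k H : Type*} [CommRing k] [Ring H] [Bialgebra k H]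
  (ℳ : ℕ → Submodule k H)

def ComulRespectsGrading : Prop :=
  ∀ n : ℕ, ∀ x ∈ ℳ n, CoalgebraStruct.comul (R := k) x ∈
    ⨆ (p : ℕ × ℕ) (_ : p.1 + p.2 = n),
      LinearMap.range (TensorProduct.map (ℳ p.1).subtype (ℳ p.2).subtype)

variable {ℳ}

theorem exists_comul_sub_tmul_one_mem (hconn : ℳ 0 = Submodule.span k {1})
    (hΔ : ComulRespectsGrading ℳ) {n : ℕ} {x : H} (hx : x ∈ ℳ n) :
    ∃ w ∈ ℳ n, CoalgebraStruct.comul (R := k) x - w ⊗ₜ[k] (1 : H) ∈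
      LinearMap.range ((⨆ i < n, ℳ i).subtype.rTensor H) := by
  have hle : (⨆ (p : ℕ × ℕ) (_ : p.1 + p.2 = n),
      LinearMap.range (TensorProduct.map (ℳ p.1).subtype (ℳ p.2).subtype)) ≤
      (ℳ n).map ((TensorProduct.mk k H H).flip 1) ⊔
        LinearMap.range ((⨆ i < n, ℳ i).subtype.rTensor H) := by
    refine iSup₂_le fun ⟨i, j⟩ hij => ?_
    rw [range_map_eq_span_tmul, Submodule.span_le]
    rintro _ ⟨u, v, rfl⟩
    obtain hi | rfl := (Nat.le.intro hij).lt_or_eq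
    · exact Submodule.mem_sup_right
        ⟨⟨u, le_iSup₂ (f := fun i (_ : i < n) => ℳ i) i hi u.2⟩ ⊗ₜ v, rfl⟩
    · obtain rfl : j = 0 := by omega
      have hv : (v : H) ∈ Submodule.span k {1} := hconn ▸ v.2
      obtain ⟨c, hc⟩ := Submodule.mem_span_singleton.mp hv
      exact Submodule.mem_sup_left
        ⟨c • u, Submodule.smul_mem _ _ u.2, by simp [← hc]⟩
  obtain ⟨_, ⟨w, hw, rfl⟩, r, hr, hsum⟩ := Submodule.mem_sup.mp (hle (hΔ n x hx))
  exact ⟨w, hw, by rw [← hsum]; simpa using hr⟩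

theorem comul_sub_tmul_one_mem [GradedAlgebra ℳ] (hconn : ℳ 0 = Submodule.span k {1})
    (hΔ : ComulRespectsGrading ℳ) {n : ℕ} {x : H} (hx : x ∈ ℳ n) :
    CoalgebraStruct.comul (R := k) x - x ⊗ₜ[k] (1 : H) ∈
      LinearMap.range ((⨆ i < n, ℳ i).subtype.rTensor H) := by
  obtain ⟨w, hw, hr⟩ := exists_comul_sub_tmul_one_mem hconn hΔ hx
  have hlow : x - w ∈ ⨆ i < n, ℳ i := by
    simpa [Coalgebra.lTensor_counit_comul] using
      rid_lTensor_mem_of_mem_range_rTensor Coalgebra.counit hr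
  have hdisj : Disjoint (ℳ n) (⨆ i < n, ℳ i) :=
    ((DirectSum.Decomposition.isInternal ℳ).submodule_iSupIndep n).mono_right
      (iSup₂_le fun i hi => le_iSup₂ (f := fun i (_ : i ≠ n) => ℳ i) i hi.ne)
  obtain rfl : x = w :=
    sub_eq_zero.mp (Submodule.disjoint_def.mp hdisj _ (sub_mem hx hw) hlow)
  exact hr

theorem LinearMap.ext_of_connected_graded [GradedAlgebra ℳ] {M : Type*} [AddCommMonoid M]
    [Module k M] (hconn : ℳ 0 = Submodule.span k {1}) {f g : H →ₗ[k] M} (h1 : f 1 = g 1)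
    (hpos : ∀ n, 1 ≤ n → ∀ x ∈ ℳ n, f x = g x) : f = g := by
  ext z
  induction z using DirectSum.Decomposition.inductionOn ℳ with
  | zero => simp
  | add z z' hz hz' => rw [map_add, map_add, hz, hz']
  | @homogeneous i z =>
    rcases i.eq_zero_or_pos with rfl | hi
    · have hz : (z : H) ∈ Submodule.span k {1} := hconn ▸ z.2
      obtain ⟨c, hc⟩ := Submodule.mem_span_singleton.mp hz
      rw [← hc, map_smul, map_smul, h1]
    · exact hpos i hi z z.2

end GradedBialgebra

section MulDefect

variable {k B A : Type*} [CommRing k] [Semiring B] [Algebra k B]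

def mulDefect [Ring A] [Algebra k A] (f : B →ₗ[k] A) : B →ₗ[k] B →ₗ[k] A :=
  (LinearMap.mul k B).compr₂ f - (LinearMap.mul k A).compl₁₂ f f

@[simp]
theorem mulDefect_apply [Ring A] [Algebra k A] (f : B →ₗ[k] A) (x y : B) :
    mulDefect f x y = f (x * y) - f x * f y := by
  simp [mulDefect]

theorem mulDefect_mul'_map_tmul [CommRing A] [Algebra k A] (f : B →ₗ[k] A) (φ : B →ₐ[k] A)
    (a b c d : B) :
    mulDefect (LinearMap.mul' k A ∘ₗ map f φ.toLinearMap) (a ⊗ₜ b) (c ⊗ₜ d) =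
      mulDefect f a c * φ (b * d) := by
  simp only [mulDefect_apply, Algebra.TensorProduct.tmul_mul_tmul, LinearMap.comp_apply,
    map_tmul, LinearMap.mul'_apply, AlgHom.toLinearMap_apply, map_mul]
  ring

end MulDefect

section Convolution

variable {k H A : Type*} [CommRing k] [Ring H] [Bialgebra k H] [CommRing A] [Algebra k A]
  {ℳ : ℕ → Submodule k H} [GradedAlgebra ℳ]

theorem mulDefect_convMul_apply (hconn : ℳ 0 = Submodule.span k {1})
    (hΔ : ComulRespectsGrading ℳ) {f : H →ₗ[k] A} (φ : H →ₐ[k] A) {a b : ℕ}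
    (hlow : ∀ i j, i + j < a + b → Submodule.map₂ (mulDefect f) (ℳ i) (ℳ j) = ⊥)
    {x y : H} (hx : x ∈ ℳ a) (hy : y ∈ ℳ b) :
    mulDefect (toConv f * toConv φ.toLinearMap).ofConv x y = mulDefect f x y := by
  set G := mulDefect (LinearMap.mul' k A ∘ₗ map f φ.toLinearMap)
  have hG : ∀ {p q : Submodule k H}, Submodule.map₂ (mulDefect f) p q = ⊥ →
      ∀ s ∈ LinearMap.range (p.subtype.rTensor H),
      ∀ t ∈ LinearMap.range (q.subtype.rTensor H), G s t = 0 := by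
    intro p q hpq s hs t ht
    have hGpq := map₂_range_rTensor_eq_bot G fun u hu v w hw z => by
      have huw := Submodule.apply_mem_map₂ (mulDefect f) hu hw
      rw [hpq, Submodule.mem_bot] at huw
      rw [mulDefect_mul'_map_tmul, huw, zero_mul]
    have hst := Submodule.apply_mem_map₂ G hs ht
    rwa [hGpq, Submodule.mem_bot] at hst
  have hx1 : x ⊗ₜ[k] (1 : H) ∈ LinearMap.range ((ℳ a).subtype.rTensor H) := ⟨⟨x, hx⟩ ⊗ₜ 1, rfl⟩
  have hy1 : y ⊗ₜ[k] (1 : H) ∈ LinearMap.range ((ℳ b).subtype.rTensor H) := ⟨⟨y, hy⟩ ⊗ₜ 1, rfl⟩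
  have hxΔ := comul_sub_tmul_one_mem hconn hΔ hx
  have hyΔ := comul_sub_tmul_one_mem hconn hΔ hy
  have hxlow : Submodule.map₂ (mulDefect f) (ℳ a) (⨆ j < b, ℳ j) = ⊥ := by
    simp only [Submodule.map₂_iSup_right, iSup_eq_bot]
    exact fun j hj => hlow a j (by omega)
  have hlowy : Submodule.map₂ (mulDefect f) (⨆ i < a, ℳ i) (ℳ b) = ⊥ := by
    simp only [Submodule.map₂_iSup_left, iSup_eq_bot]
    exact fun i hi => hlow i b (by omega)
  have hlowlow : Submodule.map₂ (mulDefect f) (⨆ i < a, ℳ i) (⨆ j < b, ℳ j) = ⊥ := by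
    simp only [Submodule.map₂_iSup_left, Submodule.map₂_iSup_right, iSup_eq_bot]
    intro i hi j hj
    exact hlow _ _ (by omega)
  calc mulDefect (toConv f * toConv φ.toLinearMap).ofConv x y
      = G (CoalgebraStruct.comul x) (CoalgebraStruct.comul y) := by
        simp only [mulDefect_apply, G, LinearMap.convMul_apply, Bialgebra.comul_mul,
          LinearMap.comp_apply]
    _ = G (x ⊗ₜ 1) (y ⊗ₜ 1) := by
        rw [← sub_add_cancel (CoalgebraStruct.comul (R := k) x) (x ⊗ₜ 1),
          ← sub_add_cancel (CoalgebraStruct.comul (R := k) y) (y ⊗ₜ 1)]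
        simp only [map_add, LinearMap.add_apply, hG hxlow _ hx1 _ hyΔ, hG hlowy _ hxΔ _ hy1,
          hG hlowlow _ hxΔ _ hyΔ]
        abel
    _ = mulDefect f x y := by rw [mulDefect_mul'_map_tmul, mul_one, map_one, mul_one]

end Convolution

section Bogolyubov

variable {k H A : Type*} [CommRing k] [Ring H] [Bialgebra k H] [CommRing A] [Algebra k A]

theorem mul'_map_comul_sub_tmul_one_sub_one_tmul (f g : H →ₗ[k] A) (hf : f 1 = 1)
    (hg : g 1 = 1) (x : H) :
    LinearMap.mul' k A (map f g (CoalgebraStruct.comul x - x ⊗ₜ 1 - 1 ⊗ₜ x)) =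
      (toConv f * toConv g).ofConv x - f x - g x := by
  simp [LinearMap.convMul_apply, hf, hg]

variable {ℳ : ℕ → Submodule k H} [GradedAlgebra ℳ] {F : Type*} [FunLike F A A]
  [AddMonoidHomClass F A A]

theorem map₂_mulDefect_eq_bot_of_rotaBaxter (hconn : ℳ 0 = Submodule.span k {1})
    (hΔ : ComulRespectsGrading ℳ) {R : F}
    (hRB : ∀ a b : A, R a * R b = R (a * R b) + R (R a * b) - R (a * b))
    {f : H →ₗ[k] A} (φ : H →ₐ[k] A) (hf1 : f 1 = 1)
    (hrec : ∀ n, 1 ≤ n → ∀ x ∈ ℳ n,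
      R ((toConv f * toConv φ.toLinearMap).ofConv x - f x) = -f x)
    (i j : ℕ) : Submodule.map₂ (mulDefect f) (ℳ i) (ℳ j) = ⊥ := by
  induction hn : i + j using Nat.strong_induction_on generalizing i j with
  | _ n ih =>
  subst hn
  rw [eq_bot_iff, Submodule.map₂_le]
  intro x hx y hy
  rw [Submodule.mem_bot]
  rcases i.eq_zero_or_pos with rfl | hi
  · obtain ⟨c, rfl⟩ := Submodule.mem_span_singleton.mp (hconn ▸ hx)
    simp [hf1]
  rcases j.eq_zero_or_pos with rfl | hj
  · obtain ⟨c, rfl⟩ := Submodule.mem_span_singleton.mp (hconn ▸ hy)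
    simp [hf1]
  set Φ := (toConv f * toConv φ.toLinearMap).ofConv
  have hΦ : mulDefect Φ x y = mulDefect f x y :=
    mulDefect_convMul_apply hconn hΔ φ (fun i' j' h => ih _ h i' j' rfl) hx hy
  have hxy := hrec (i + j) (by omega) (x * y) (SetLike.mul_mem_graded hx hy)
  have hprod := mul_eq_neg_map_of_rotaBaxter hRB (hrec i hi x hx) (hrec j hj y hy)
  simp only [sub_add_cancel] at hprod
  simp only [mulDefect_apply] at hΦ ⊢
  calc f (x * y) - f x * f y
      = -R (Φ (x * y) - f (x * y) - (Φ x * Φ y - f x * f y)) := by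
        rw [map_sub]; linear_combination hxy - hprod
    _ = 0 := by rw [show Φ (x * y) - f (x * y) - (Φ x * Φ y - f x * f y) = 0 by
          linear_combination hΦ, map_zero, neg_zero]

theorem map_mul_of_rotaBaxter (hconn : ℳ 0 = Submodule.span k {1})
    (hΔ : ComulRespectsGrading ℳ) {R : F}
    (hRB : ∀ a b : A, R a * R b = R (a * R b) + R (R a * b) - R (a * b))
    {f : H →ₗ[k] A} (φ : H →ₐ[k] A) (hf1 : f 1 = 1)
    (hrec : ∀ n, 1 ≤ n → ∀ x ∈ ℳ n,
      R ((toConv f * toConv φ.toLinearMap).ofConv x - f x) = -f x)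
    (x y : H) : f (x * y) = f x * f y := by
  have hℳ := (DirectSum.Decomposition.isInternal ℳ).submodule_iSup_eq_top
  have hD := LinearMap.eq_zero_of_map₂_eq_bot hℳ hℳ _
    (map₂_mulDefect_eq_bot_of_rotaBaxter hconn hΔ hRB φ hf1 hrec)
  simpa [sub_eq_zero] using LinearMap.congr_fun₂ hD x y

end Bogolyubov

theorem birkhoff_factors_are_multiplicative_general
    {k : Type*} [Field k]
    {H : Type*} [CommRing H] [Bialgebra k H]
    (ℳ : ℕ → Submodule k H) [GradedAlgebra ℳ]
    (hconn : ℳ 0 = Submodule.span k {1})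
    (hcomul_graded : ∀ n : ℕ, ∀ x ∈ ℳ n,
      CoalgebraStruct.comul (R := k) x ∈
        ⨆ (p : ℕ × ℕ) (_ : p.1 + p.2 = n),
          LinearMap.range (TensorProduct.map (ℳ p.1).subtype (ℳ p.2).subtype))
    {A : Type*} [CommRing A] [Algebra k A]
    (R : A →ₗ[k] A)
    (hRB : ∀ a b : A, R a * R b = R (a * R b) + R (R a * b) - R (a * b))
    (φ : H →ₐ[k] A) (φm φp : H →ₗ[k] A)
    (hφm1 : φm 1 = 1) (hφp1 : φp 1 = 1)
    (hm : ∀ n : ℕ, 1 ≤ n → ∀ x ∈ ℳ n,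
      φm x = - R (φ x + (LinearMap.mul' k A)
        ((TensorProduct.map φm φ.toLinearMap)
          (CoalgebraStruct.comul (R := k) x - x ⊗ₜ[k] (1 : H) - (1 : H) ⊗ₜ[k] x))))
    (hp : ∀ n : ℕ, 1 ≤ n → ∀ x ∈ ℳ n,
      φp x = (φ x + (LinearMap.mul' k A)
        ((TensorProduct.map φm φ.toLinearMap)
          (CoalgebraStruct.comul (R := k) x - x ⊗ₜ[k] (1 : H) - (1 : H) ⊗ₜ[k] x)))
        - R (φ x + (LinearMap.mul' k A)
        ((TensorProduct.map φm φ.toLinearMap)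
          (CoalgebraStruct.comul (R := k) x - x ⊗ₜ[k] (1 : H) - (1 : H) ⊗ₜ[k] x)))) :
    (∀ x y : H, φm (x * y) = φm x * φm y) ∧ (∀ x y : H, φp (x * y) = φp x * φp y) := by
  set Φ := (toConv φm * toConv φ.toLinearMap).ofConv
  have hprep : ∀ x, φ x + LinearMap.mul' k A ((TensorProduct.map φm φ.toLinearMap)
      (CoalgebraStruct.comul (R := k) x - x ⊗ₜ[k] (1 : H) - (1 : H) ⊗ₜ[k] x)) = Φ x - φm x :=
    fun x => by
      rw [mul'_map_comul_sub_tmul_one_sub_one_tmul φm _ hφm1 (map_one φ)]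
      simp only [AlgHom.toLinearMap_apply]
      ring
  have hrec : ∀ n, 1 ≤ n → ∀ x ∈ ℳ n, R (Φ x - φm x) = -φm x := fun n hn x hx => by
    have h := hm n hn x hx
    rw [hprep] at h
    linear_combination h
  have hmul := map_mul_of_rotaBaxter hconn hcomul_graded hRB φ hφm1 hrec
  have hpΦ : φp = Φ := LinearMap.ext_of_connected_graded hconn
    (by simp [Φ, Algebra.TensorProduct.one_def, hφm1, hφp1]) fun n hn x hx => by
      have h := hp n hn x hx
      rw [hprep] at h
      linear_combination h - hrec n hn x hx
  let ψ : H →ₐ[k] A := AlgHom.ofLinearMap φm hφm1 hmul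
  refine ⟨hmul, fun x y => ?_⟩
  rw [hpΦ]
  exact map_mul (toConv ψ * toConv φ).ofConv x y

/-- Connes–Kreimer Birkhoff factorization: for a graded connected commutative
bialgebra `H` over a field `k` (grading `ℳ` with `ℳ 0 = span {1}`, the
coproduct respecting the grading), a commutative Rota–Baxter algebra `(A, R)`
of weight `−1` with `R 1 = 0`, and an algebra homomorphism `φ : H → A`, the
maps `φ₋`, `φ₊` defined by the Bogolyubov recursion
`φ₋ x = −R(φ̃ x)`, `φ₊ x = (1−R)(φ̃ x)`, where
`φ̃ x = φ x + (mult) ∘ (φ₋ ⊗ φ) (Δ x − x ⊗ 1 − 1 ⊗ x)`,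
are both multiplicative. -/
theorem birkhoff_factors_are_multiplicative
    {k : Type*} [Field k]
    {H : Type*} [CommRing H] [Bialgebra k H]
    (ℳ : ℕ → Submodule k H) [GradedAlgebra ℳ]
    (hconn : ℳ 0 = Submodule.span k {1})
    (hcomul_graded : ∀ n : ℕ, ∀ x ∈ ℳ n,
      CoalgebraStruct.comul (R := k) x ∈
        ⨆ (p : ℕ × ℕ) (_ : p.1 + p.2 = n),
          LinearMap.range (TensorProduct.map (ℳ p.1).subtype (ℳ p.2).subtype))
    {A : Type*} [CommRing A] [Algebra k A]
    (R : A →ₗ[k] A)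
    (hRB : ∀ a b : A, R a * R b = R (a * R b) + R (R a * b) - R (a * b))
    (hR1 : R 1 = 0)
    (φ : H →ₐ[k] A) (φm φp : H →ₗ[k] A)
    (hφm1 : φm 1 = 1) (hφp1 : φp 1 = 1)
    (hm : ∀ n : ℕ, 1 ≤ n → ∀ x ∈ ℳ n,
      φm x = - R (φ x + (LinearMap.mul' k A)
        ((TensorProduct.map φm φ.toLinearMap)
          (CoalgebraStruct.comul (R := k) x - x ⊗ₜ[k] (1 : H) - (1 : H) ⊗ₜ[k] x))))
    (hp : ∀ n : ℕ, 1 ≤ n → ∀ x ∈ ℳ n,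
      φp x = (φ x + (LinearMap.mul' k A)
        ((TensorProduct.map φm φ.toLinearMap)
          (CoalgebraStruct.comul (R := k) x - x ⊗ₜ[k] (1 : H) - (1 : H) ⊗ₜ[k] x)))
        - R (φ x + (LinearMap.mul' k A)
        ((TensorProduct.map φm φ.toLinearMap)
          (CoalgebraStruct.comul (R := k) x - x ⊗ₜ[k] (1 : H) - (1 : H) ⊗ₜ[k] x)))) :
    (∀ x y : H, φm (x * y) = φm x * φm y) ∧ (∀ x y : H, φp (x * y) = φp x * φp y) :=
  birkhoff_factors_are_multiplicative_general ℳ hconn hcomul_graded R hRB φ φm φp hφm1 hφp1 hm hp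
end
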